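/- arXiv:2204.07895 — 3 statements merged into one kernel-verified Lean document; each statement's English description precedes it below -/
import Mathlib

section
/- If u is a 3×3 traceless matrix-valued function on a domain Ω whose row-wise curl is square-integrable (u ∈ H(curl, Ω; T)), then the column-wise divergence div*(u) is square-integrable, i.e. u^T ∈ H(div, Ω; T). -/
open MeasureTheory Matrix

noncomputable section

abbrev V3 : Type := Fin 3 → ℝ

/-- Partial derivative in the `i`-th coordinate direction. -/
def pd (i : Fin 3) (f : V3 → ℝ) (x : V3) : ℝ := fderiv ℝ f x (Pi.single i 1)

/-- Curl of a vector field on `ℝ³`. -/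
def curlVec (v : V3 → V3) (x : V3) : V3 :=
  ![pd 1 (fun y => v y 2) x - pd 2 (fun y => v y 1) x,
    pd 2 (fun y => v y 0) x - pd 0 (fun y => v y 2) x,
    pd 0 (fun y => v y 1) x - pd 1 (fun y => v y 0) x]

/-- Row-wise curl of a matrix field. -/
def rowCurl (u : V3 → Matrix (Fin 3) (Fin 3) ℝ) (x : V3) : Matrix (Fin 3) (Fin 3) ℝ :=
  Matrix.of fun i j => curlVec (fun y => u y i) x j

/-- Column-wise divergence of a matrix field: `(div* u)_j = Σ_i ∂_i u_{ij}`. -/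
def divStar (u : V3 → Matrix (Fin 3) (Fin 3) ℝ) (x : V3) : V3 :=
  fun j => ∑ i, pd i (fun y => u y i j) x

/-- If a traceless C¹ matrix field `u` on an open set `Ω` has each entry of its
row-wise curl square-integrable on `Ω`, then each component of its column-wise
divergence `div* u` is square-integrable on `Ω`, i.e. `uᵀ ∈ H(div, Ω; 𝕋)`. -/
theorem traceless_curl_L2_implies_divStar_L2
    (Ω : Set V3) (hΩ : IsOpen Ω)
    (u : V3 → Matrix (Fin 3) (Fin 3) ℝ)
    (hu : ∀ i j, ContDiffOn ℝ 1 (fun x => u x i j) Ω)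
    (htr : ∀ x ∈ Ω, Matrix.trace (u x) = 0)
    (hL2 : ∀ i j, MemLp (fun x => u x i j) 2 (volume.restrict Ω))
    (hcurl : ∀ i j, MemLp (fun x => rowCurl u x i j) 2 (volume.restrict Ω)) :
    ∀ j, MemLp (fun x => divStar u x j) 2 (volume.restrict Ω) := by
  -- derivative of the trace vanishes on Ω
  have key : ∀ x ∈ Ω, ∀ i : Fin 3,
      pd i (fun y => u y 0 0) x + pd i (fun y => u y 1 1) x
        + pd i (fun y => u y 2 2) x = 0 := by
    intro x hx i
    have hd : ∀ k l : Fin 3, DifferentiableAt ℝ (fun y => u y k l) x := fun k l =>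
      ((hu k l).contDiffAt (hΩ.mem_nhds hx)).differentiableAt one_ne_zero
    have hg : (fun y => u y 0 0 + u y 1 1 + u y 2 2) =ᶠ[nhds x] fun _ => (0 : ℝ) := by
      filter_upwards [hΩ.mem_nhds hx] with y hy
      have := htr y hy
      simpa [Matrix.trace, Matrix.diag, Fin.sum_univ_three] using this
    have h0 : fderiv ℝ (fun y => u y 0 0 + u y 1 1 + u y 2 2) x = 0 := by
      rw [hg.fderiv_eq]
      simp
    have hsplit : fderiv ℝ (fun y => u y 0 0 + u y 1 1 + u y 2 2) x
        = fderiv ℝ (fun y => u y 0 0) x + fderiv ℝ (fun y => u y 1 1) x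
          + fderiv ℝ (fun y => u y 2 2) x := by
      rw [fderiv_fun_add (f := fun y => u y 0 0 + u y 1 1) ((hd 0 0).add (hd 1 1)) (hd 2 2), fderiv_fun_add (hd 0 0) (hd 1 1)]
    have h1 : (fderiv ℝ (fun y => u y 0 0 + u y 1 1 + u y 2 2) x) (Pi.single i 1) = 0 := by
      rw [h0]; simp
    rw [hsplit] at h1
    simpa [pd] using h1
  -- pointwise identity on Ω
  have heq : ∀ x ∈ Ω, ∀ j : Fin 3, divStar u x j =
      rowCurl u x (j + 2) (j + 1) - rowCurl u x (j + 1) (j + 2) := by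
    intro x hx j
    fin_cases j
    · have h := key x hx 0
      simp [divStar, rowCurl, curlVec, Fin.sum_univ_three]
      linarith
    · have h := key x hx 1
      simp [divStar, rowCurl, curlVec, Fin.sum_univ_three]
      linarith
    · have h := key x hx 2
      simp [divStar, rowCurl, curlVec, Fin.sum_univ_three]
      linarith
  intro j
  have hmem : MemLp (fun x => rowCurl u x (j + 2) (j + 1) - rowCurl u x (j + 1) (j + 2))
      2 (volume.restrict Ω) := (hcurl _ _).sub (hcurl _ _)
  refine hmem.ae_eq ?_
  filter_upwards [ae_restrict_mem hΩ.measurableSet] with x hx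
  exact (heq x hx j).symm

end
end

section
/- Let V_{[k-1]}(D;ℝ³) := P_{k-1,k-2,k-2} × P_{k-2,k-1,k-2} × P_{k-2,k-2,k-1} (tensor-product polynomial spaces in three variables). Then the divergence map div : V_{[k-1]}(D;ℝ³) → Q_{k-2}(D;ℝ) is surjective; in fact div(x q) ranges over all of Q_{k-2} as q ranges over Q_{k-2}, where x = (x₁,x₂,x₃)ᵀ. -/
open MvPolynomial

noncomputable section

abbrev P3 : Type := MvPolynomial (Fin 3) ℝ

/-- `Qb m q` : `q` has degree at most `m` in each of the three variables. -/
def Qb (m : ℕ) (q : P3) : Prop := ∀ i, q.degreeOf i ≤ m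

/-- Membership in `M_{[k-1]} = P_{k-2,k-1,k-1} × P_{k-1,k-2,k-1} × P_{k-1,k-1,k-2}`. -/
def Mb (k : ℕ) (u : Fin 3 → P3) : Prop :=
  ∀ i j, (u i).degreeOf j ≤ if j = i then k - 2 else k - 1

/-- Membership in `V_{[k-1]} = P_{k-1,k-2,k-2} × P_{k-2,k-1,k-2} × P_{k-2,k-2,k-1}`. -/
def Vb (k : ℕ) (v : Fin 3 → P3) : Prop :=
  ∀ i j, (v i).degreeOf j ≤ if j = i then k - 1 else k - 2

/-- Gradient of a polynomial. -/
def gradP (q : P3) : Fin 3 → P3 := fun i => pderiv i q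

/-- Curl of a polynomial vector field. -/
def curlP (w : Fin 3 → P3) : Fin 3 → P3 :=
  ![pderiv 1 (w 2) - pderiv 2 (w 1),
    pderiv 2 (w 0) - pderiv 0 (w 2),
    pderiv 0 (w 1) - pderiv 1 (w 0)]

/-- Divergence of a polynomial vector field. -/
def divP (v : Fin 3 → P3) : P3 := ∑ i, pderiv i (v i)

lemma pderiv_X_mul_monomial (d : Fin 3 →₀ ℕ) (c : ℝ) (i : Fin 3) :
    pderiv i (X i * monomial d c) = monomial d (((d i + 1 : ℕ) : ℝ) * c) := by
  rw [X, monomial_mul, one_mul, pderiv_monomial]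
  congr 1
  · ext j
    simp [Finsupp.single_apply, Finsupp.tsub_apply]
  · simp [Finsupp.single_apply]
    ring

lemma degreeOf_monomial_le (d : Fin 3 →₀ ℕ) (c : ℝ) (i : Fin 3) :
    degreeOf i (monomial d c) ≤ d i := by
  rw [degreeOf_le_iff]
  intro m hm
  rw [mem_support_iff, coeff_monomial] at hm
  by_cases h : d = m
  · subst h; exact le_rfl
  · simp [h] at hm

/-- `div : V_{[k-1]} → Q_{k-2}` is surjective; in fact every `p ∈ Q_{k-2}` is
`div(x q)` for some `q ∈ Q_{k-2}`, and `x q ∈ V_{[k-1]}`. -/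
theorem div_xq_surjective (k : ℕ) (hk : 2 ≤ k) :
    ∀ p : P3, Qb (k - 2) p →
      ∃ q : P3, Qb (k - 2) q ∧ Vb k (fun i => X i * q) ∧
        divP (fun i => X i * q) = p := by
  intro p hp
  set N : (Fin 3 →₀ ℕ) → ℕ := fun d => d 0 + d 1 + d 2 + 3 with hN
  set q : P3 := ∑ d ∈ p.support, monomial d (p.coeff d / (N d : ℝ)) with hq
  have hqdeg : ∀ i, q.degreeOf i ≤ k - 2 := by
    intro i
    refine le_trans (degreeOf_sum_le _ _ _) (Finset.sup_le fun d hd => ?_)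
    exact le_trans (degreeOf_monomial_le d _ i)
      (le_trans (monomial_le_degreeOf i hd) (hp i))
  refine ⟨q, hqdeg, ?_, ?_⟩
  · intro i j
    refine le_trans (degreeOf_mul_le _ _ _) ?_
    rw [degreeOf_X]
    by_cases h : j = i
    · subst h
      simp only [eq_self_iff_true, if_true]
      have := hqdeg j
      omega
    · simp only [if_neg h, zero_add]
      exact hqdeg j
  · unfold divP
    have hexp : ∀ i : Fin 3, pderiv i (X i * q) =
        ∑ d ∈ p.support, pderiv i (X i * monomial d (p.coeff d / (N d : ℝ))) := by
      intro i
      rw [hq, Finset.mul_sum, map_sum]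
    simp_rw [hexp]
    rw [Finset.sum_comm]
    have key : ∀ d ∈ p.support,
        (∑ i : Fin 3, pderiv i (X i * monomial d (p.coeff d / (N d : ℝ))))
          = monomial d (p.coeff d) := by
      intro d hd
      simp_rw [pderiv_X_mul_monomial]
      rw [Fin.sum_univ_three, ← map_add, ← map_add]
      congr 1
      have hNne : ((N d : ℝ)) ≠ 0 := by positivity
      field_simp
      push_cast [hN]
      ring
    rw [Finset.sum_congr rfl key, ← as_sum]


end
end

section
/- The space RT := {a x + b : a ∈ ℝ, b ∈ ℝ³} of lowest-order Raviart–Thomas fields on ℝ³ has dimension 4, and RT equals the kernel of the operator dev grad acting on C¹ vector fields on a connected open set: dev grad v = 0 if and only if v ∈ RT. -/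
open MeasureTheory Matrix

noncomputable section

/-- Row-wise divergence of a matrix field: `(div u)_i = Σ_j ∂_j u_{ij}`. -/
def rowDiv (u : V3 → Matrix (Fin 3) (Fin 3) ℝ) (x : V3) : V3 :=
  fun i => ∑ j, pd j (fun y => u y i j) x

/-- Symmetric part of a matrix. -/
def symM (A : Matrix (Fin 3) (Fin 3) ℝ) : Matrix (Fin 3) (Fin 3) ℝ :=
  (1/2 : ℝ) • (A + Aᵀ)

/-- The skew-symmetric matrix `mspn v` with `(mspn v) w = v × w`. -/
def mspn (v : V3) : Matrix (Fin 3) (Fin 3) ℝ :=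
  !![0, -v 2, v 1; v 2, 0, -v 0; -v 1, v 0, 0]

/-- Cross product on `ℝ³`. -/
def cross (a b : V3) : V3 :=
  ![a 1 * b 2 - a 2 * b 1, a 2 * b 0 - a 0 * b 2, a 0 * b 1 - a 1 * b 0]

/-- Row-wise gradient (Jacobian) of a vector field: `(grad v)_{ij} = ∂_j v_i`. -/
def gradM (v : V3 → V3) (x : V3) : Matrix (Fin 3) (Fin 3) ℝ :=
  Matrix.of fun i j => pd j (fun y => v y i) x

/-- Deviatoric (traceless) part of a matrix. -/
def devM (A : Matrix (Fin 3) (Fin 3) ℝ) : Matrix (Fin 3) (Fin 3) ℝ :=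
  A - (Matrix.trace A / 3) • (1 : Matrix (Fin 3) (Fin 3) ℝ)

/-- Divergence of a vector field. -/
def divVec (v : V3 → V3) (x : V3) : ℝ := ∑ i, pd i (fun y => v y i) x

/-- Gradient of a scalar field. -/
def gradVec (f : V3 → ℝ) (x : V3) : V3 := fun i => pd i f x

/-- The lowest-order Raviart–Thomas space `RT = {a x + b}`. -/
def RTset : Set (V3 → V3) := {v | ∃ (a : ℝ) (b : V3), ∀ x, v x = a • x + b}


-- Auxiliary lemmas

/-- interval bound for coordinates -/
lemma abs_mem_interval {a b t s : ℝ} (hs : s ∈ Set.uIcc 0 t) :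
    |a + s - b| ≤ max (|a - b|) (|a + t - b|) := by
  rcases le_total 0 t with h | h
  · rw [Set.uIcc_of_le h] at hs
    obtain ⟨h1, h2⟩ := hs
    rw [abs_le]
    constructor
    · have : -(|a - b|) ≤ a - b := neg_abs_le _
      have : -(max (|a - b|) (|a + t - b|)) ≤ -(|a - b|) := by
        simp [le_max_left]
      linarith [neg_abs_le (a - b), le_max_left (|a - b|) (|a + t - b|)]
    · have := le_abs_self (a + t - b)
      have := le_max_right (|a - b|) (|a + t - b|)
      linarith
  · rw [Set.uIcc_of_ge h] at hs
    obtain ⟨h1, h2⟩ := hs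
    rw [abs_le]
    constructor
    · linarith [neg_abs_le (a + t - b), le_max_right (|a - b|) (|a + t - b|)]
    · linarith [le_abs_self (a - b), le_max_left (|a - b|) (|a + t - b|)]

/-- constancy along a coordinate direction -/
lemma const_dir {f : V3 → ℝ} {U : Set V3} (hU : IsOpen U)
    (hd : ∀ x ∈ U, DifferentiableAt ℝ f x)
    {j : Fin 3} (hz : ∀ x ∈ U, pd j f x = 0)
    {x : V3} {t : ℝ} (hseg : ∀ s ∈ Set.uIcc 0 t, x + s • (Pi.single j 1 : V3) ∈ U) :
    f (x + t • (Pi.single j 1 : V3)) = f x := by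
  set g : ℝ → ℝ := fun s => f (x + s • (Pi.single j 1 : V3)) with hg
  have hder : ∀ s ∈ Set.uIcc 0 t, HasDerivAt g 0 s := by
    intro s hs
    have hmem := hseg s hs
    have hL : HasDerivAt (fun s : ℝ => x + s • (Pi.single j 1 : V3)) (Pi.single j 1) s := by
      simpa using ((hasDerivAt_id s).smul_const (Pi.single j 1 : V3)).const_add x
    have := ((hd _ hmem).hasFDerivAt.comp_hasDerivAt s hL)
    have h2 : HasDerivAt g (pd j f (x + s • (Pi.single j 1 : V3))) s := this
    rwa [hz _ hmem] at h2
  have key : ‖g t - g 0‖ ≤ 0 * ‖t - 0‖ := by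
    apply Convex.norm_image_sub_le_of_norm_hasFDerivWithin_le
      (f' := fun _ => (0 : ℝ →L[ℝ] ℝ))
      (fun s hs => by
        have h0 : (ContinuousLinearMap.smulRight (1 : ℝ →L[ℝ] ℝ) (0 : ℝ)) = 0 := by
          ext; simp
        exact h0 ▸ (hder s hs).hasFDerivAt.hasFDerivWithinAt)
      (fun s _ => by simp) (convex_uIcc 0 t) Set.left_mem_uIcc Set.right_mem_uIcc
  have : g t = g 0 := by
    rw [zero_mul] at key
    exact sub_eq_zero.mp (norm_le_zero_iff.mp key)
  simpa [hg] using this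

/-- translation invariance of the full derivative -/
lemma fderiv_shift {f : V3 → ℝ} {U : Set V3} (hU : IsOpen U)
    (hd : ∀ x ∈ U, DifferentiableAt ℝ f x)
    {a : V3} (hinv : ∀ y ∈ U, y + a ∈ U → f (y + a) = f y)
    {x : V3} (hx : x ∈ U) (hxa : x + a ∈ U)
    (hnbhd : ∀ᶠ y in nhds x, y ∈ U ∧ y + a ∈ U) :
    fderiv ℝ f (x + a) = fderiv ℝ f x := by
  have htr : HasFDerivAt (fun y : V3 => y + a) (ContinuousLinearMap.id ℝ V3) x := by
    simpa using (hasFDerivAt_id (𝕜 := ℝ) x).add_const a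
  have hcomp : HasFDerivAt (fun y => f (y + a)) (fderiv ℝ f (x + a)) x := by
    have := (hd _ hxa).hasFDerivAt.comp x htr
    exact this
  have heq : (fun y => f (y + a)) =ᶠ[nhds x] f := by
    filter_upwards [hnbhd] with y hy
    exact hinv y hy.1 hy.2
  have := Filter.EventuallyEq.fderiv_eq (𝕜 := ℝ) heq
  rw [← this, hcomp.fderiv]

/-- locally constant implies constant on connected open set -/
lemma loc_const_eq {Ω : Set V3} (hΩ : IsOpen Ω) (hc : IsConnected Ω) {g : V3 → ℝ}
    (h : ∀ x ∈ Ω, ∃ ε > 0, Metric.ball x ε ⊆ Ω ∧ ∀ y ∈ Metric.ball x ε, g y = g x)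
    {x y : V3} (hx : x ∈ Ω) (hy : y ∈ Ω) : g x = g y := by
  set S : Set V3 := {w | w ∈ Ω ∧ g w = g x} with hS
  set T : Set V3 := {w | w ∈ Ω ∧ g w ≠ g x} with hT
  have hSopen : IsOpen S := by
    rw [Metric.isOpen_iff]
    rintro w ⟨hwΩ, hgw⟩
    obtain ⟨ε, hε, hball, hconst⟩ := h w hwΩ
    exact ⟨ε, hε, fun z hz => ⟨hball hz, (hconst z hz).trans hgw⟩⟩
  have hTopen : IsOpen T := by
    rw [Metric.isOpen_iff]
    rintro w ⟨hwΩ, hgw⟩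
    obtain ⟨ε, hε, hball, hconst⟩ := h w hwΩ
    exact ⟨ε, hε, fun z hz => ⟨hball hz, by rw [hconst z hz]; exact hgw⟩⟩
  by_contra hne
  have hsub : Ω ⊆ S ∪ T := by
    intro w hw
    by_cases hgw : g w = g x
    · exact Or.inl ⟨hw, hgw⟩
    · exact Or.inr ⟨hw, hgw⟩
  have := hc.isPreconnected S T hSopen hTopen hsub ⟨x, hx, hx, rfl⟩ ⟨y, hy, hy, fun h' => hne h'.symm⟩
  obtain ⟨z, _, ⟨_, h1⟩, ⟨_, h2⟩⟩ := this
  exact h2 h1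

/-- one coordinate step for `c = pd 0 (v·0)` inside a ball -/
lemma c_step {v : V3 → V3} {Ω : Set V3} (hΩ : IsOpen Ω)
    (hdiff : ∀ i, ∀ x ∈ Ω, DifferentiableAt ℝ (fun y => v y i) x)
    (hoff : ∀ x ∈ Ω, ∀ i j, i ≠ j → pd j (fun y => v y i) x = 0)
    (hdiag : ∀ x ∈ Ω, ∀ i, pd i (fun y => v y i) x = pd 0 (fun y => v y 0) x)
    {z : V3} {ε : ℝ} (hε : 0 < ε) (hball : Metric.ball z ε ⊆ Ω)
    {x : V3} {t : ℝ} {j : Fin 3} (hx : x ∈ Metric.ball z ε)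
    (hxt : x + t • (Pi.single j 1 : V3) ∈ Metric.ball z ε) :
    pd 0 (fun y => v y 0) (x + t • (Pi.single j 1 : V3)) = pd 0 (fun y => v y 0) x := by
  classical
  set k : Fin 3 := if j = 0 then 1 else 0 with hk
  have hkj : k ≠ j := by
    rcases Fin.eq_zero_or_eq_succ j with h | h
    · subst h; simp [hk]
    · fin_cases j <;> simp_all [hk]
  set f : V3 → ℝ := fun y => v y k with hf
  set B : Set V3 := Metric.ball z ε with hB
  have hBopen : IsOpen B := Metric.isOpen_ball
  have hdB : ∀ w ∈ B, DifferentiableAt ℝ f w := fun w hw => hdiff k w (hball hw)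
  have hzero : ∀ w ∈ B, pd j f w = 0 := fun w hw => hoff w (hball hw) k j hkj
  -- coordinate membership helper
  have hmem_seg : ∀ w ∈ B, w + t • (Pi.single j 1 : V3) ∈ B →
      ∀ s ∈ Set.uIcc 0 t, w + s • (Pi.single j 1 : V3) ∈ B := by
    intro w hw hwt s hs
    rw [hB, Metric.mem_ball, dist_pi_lt_iff hε]
    intro i
    rw [Metric.mem_ball, dist_pi_lt_iff hε] at hw hwt
    have hwi := hw i
    have hwti := hwt i
    by_cases hij : i = j
    · subst hij
      simp only [Pi.add_apply, Pi.smul_apply, Pi.single_apply, eq_self_iff_true, if_true,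
        smul_eq_mul, mul_one, Real.dist_eq] at hwi hwti ⊢
      calc |w i + s - z i| ≤ max (|w i - z i|) (|w i + t - z i|) := abs_mem_interval hs
        _ < ε := max_lt hwi hwti
    · simpa [Pi.single_apply, Ne.symm hij, hij, Real.dist_eq] using hwi
  have hinv : ∀ w ∈ B, w + t • (Pi.single j 1 : V3) ∈ B →
      f (w + t • (Pi.single j 1 : V3)) = f w := by
    intro w hw hwt
    exact const_dir hBopen hdB hzero (hmem_seg w hw hwt)
  have hnbhd : ∀ᶠ y in nhds x, y ∈ B ∧ y + t • (Pi.single j 1 : V3) ∈ B := by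
    have h1 : ∀ᶠ y in nhds x, y ∈ B := hBopen.eventually_mem hx
    have h2 : ∀ᶠ y in nhds x, y + t • (Pi.single j 1 : V3) ∈ B := by
      have hcont : Continuous (fun y : V3 => y + t • (Pi.single j 1 : V3)) :=
        continuous_id.add continuous_const
      exact hcont.continuousAt.eventually_mem (hBopen.mem_nhds hxt)
    exact h1.and h2
  have hfd := fderiv_shift hBopen hdB hinv hx hxt hnbhd
  have h1 := hdiag _ (hball hxt) k
  have h2 := hdiag _ (hball hx) k
  rw [← h1, ← h2]
  simp only [pd, hf]
  rw [hfd]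

/-- `c` is constant on balls inside `Ω` -/
lemma c_ball {v : V3 → V3} {Ω : Set V3} (hΩ : IsOpen Ω)
    (hdiff : ∀ i, ∀ x ∈ Ω, DifferentiableAt ℝ (fun y => v y i) x)
    (hoff : ∀ x ∈ Ω, ∀ i j, i ≠ j → pd j (fun y => v y i) x = 0)
    (hdiag : ∀ x ∈ Ω, ∀ i, pd i (fun y => v y i) x = pd 0 (fun y => v y 0) x)
    {z : V3} {ε : ℝ} (hε : 0 < ε) (hball : Metric.ball z ε ⊆ Ω)
    {y : V3} (hy : y ∈ Metric.ball z ε) :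
    pd 0 (fun w => v w 0) y = pd 0 (fun w => v w 0) z := by
  set p1 : V3 := y + (z 0 - y 0) • (Pi.single 0 1 : V3) with hp1
  set p2 : V3 := p1 + (z 1 - y 1) • (Pi.single 1 1 : V3) with hp2
  have hyc : ∀ i, |y i - z i| < ε := by
    intro i
    rw [Metric.mem_ball, dist_pi_lt_iff hε] at hy
    simpa [Real.dist_eq] using hy i
  have hp1c : ∀ i, |p1 i - z i| < ε := by
    intro i
    fin_cases i <;> simp [hp1, Pi.single_apply, hε] <;>
      simpa using hyc _
  have hp2c : ∀ i, |p2 i - z i| < ε := by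
    intro i
    fin_cases i <;> simp [hp2, hp1, Pi.single_apply, hε] <;>
      simpa using hyc _
  have memball : ∀ w : V3, (∀ i, |w i - z i| < ε) → w ∈ Metric.ball z ε := by
    intro w hw
    rw [Metric.mem_ball, dist_pi_lt_iff hε]
    intro i
    simpa [Real.dist_eq] using hw i
  have hyB : y ∈ Metric.ball z ε := hy
  have hp1B : p1 ∈ Metric.ball z ε := memball _ hp1c
  have hp2B : p2 ∈ Metric.ball z ε := memball _ hp2c
  have hzB : z ∈ Metric.ball z ε := Metric.mem_ball_self hε
  have hzp2 : z = p2 + (z 2 - y 2) • (Pi.single 2 1 : V3) := by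
    funext i
    fin_cases i <;> simp [hp2, hp1, Pi.single_apply] <;> ring
  have s1 : pd 0 (fun w => v w 0) p1 = pd 0 (fun w => v w 0) y :=
    c_step hΩ hdiff hoff hdiag hε hball hyB (by rw [← hp1]; exact hp1B)
  have s2 : pd 0 (fun w => v w 0) p2 = pd 0 (fun w => v w 0) p1 :=
    c_step hΩ hdiff hoff hdiag hε hball hp1B (by rw [← hp2]; exact hp2B)
  have s3 : pd 0 (fun w => v w 0) z = pd 0 (fun w => v w 0) p2 := by
    rw [hzp2]
    exact c_step hΩ hdiff hoff hdiag hε hball hp2B (by rw [← hzp2]; exact hzB)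
  rw [s3, s2, s1]

lemma part2 (Ω : Set V3) (hΩ : IsOpen Ω) (hconn : IsConnected Ω)
    (v : V3 → V3) (hv : ∀ i, ContDiffOn ℝ 1 (fun x => v x i) Ω) :
    ((∀ x ∈ Ω, devM (gradM v x) = 0) ↔
      ∃ (a : ℝ) (b : V3), ∀ x ∈ Ω, v x = a • x + b) := by
  classical
  have hdiff : ∀ i, ∀ x ∈ Ω, DifferentiableAt ℝ (fun y => v y i) x := fun i x hx =>
    ((hv i).differentiableOn one_ne_zero).differentiableAt (hΩ.mem_nhds hx)
  constructor
  · intro hdev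
    -- extract structure of the gradient
    have hgrad : ∀ x ∈ Ω, gradM v x =
        (Matrix.trace (gradM v x) / 3) • (1 : Matrix (Fin 3) (Fin 3) ℝ) := by
      intro x hx
      have := hdev x hx
      rw [devM, sub_eq_zero] at this
      exact this
    have hoff : ∀ x ∈ Ω, ∀ i j, i ≠ j → pd j (fun y => v y i) x = 0 := by
      intro x hx i j hij
      have := congrFun (congrFun (hgrad x hx) i) j
      simpa [gradM, Matrix.one_apply_ne hij] using this
    have hdiag : ∀ x ∈ Ω, ∀ i, pd i (fun y => v y i) x = pd 0 (fun y => v y 0) x := by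
      intro x hx i
      have h1 := congrFun (congrFun (hgrad x hx) i) i
      have h2 := congrFun (congrFun (hgrad x hx) 0) 0
      simp only [gradM, Matrix.of_apply, Matrix.smul_apply, Matrix.one_apply_eq,
        smul_eq_mul, mul_one] at h1 h2
      rw [h1, h2]
    set c : V3 → ℝ := fun x => pd 0 (fun y => v y 0) x with hc
    have hloc : ∀ x ∈ Ω, ∃ ε > 0, Metric.ball x ε ⊆ Ω ∧
        ∀ y ∈ Metric.ball x ε, c y = c x := by
      intro x hx
      obtain ⟨ε, hε, hball⟩ := Metric.isOpen_iff.mp hΩ x hx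
      exact ⟨ε, hε, hball, fun y hy => c_ball hΩ hdiff hoff hdiag hε hball hy⟩
    obtain ⟨x₀, hx₀⟩ := hconn.nonempty
    set a : ℝ := c x₀ with ha
    have hca : ∀ x ∈ Ω, c x = a := fun x hx => loc_const_eq hΩ hconn hloc hx hx₀
    -- each component of v - a x has zero derivative
    have hfz : ∀ i : Fin 3, ∀ x ∈ Ω, fderiv ℝ (fun y => v y i - a * y i) x = 0 := by
      intro i x hx
      have hproj : HasFDerivAt (fun y : V3 => y i)
          (ContinuousLinearMap.proj i : V3 →L[ℝ] ℝ) x :=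
        hasFDerivAt_apply (𝕜 := ℝ) i x
      have hmul : HasFDerivAt (fun y : V3 => a * y i)
          (a • (ContinuousLinearMap.proj i : V3 →L[ℝ] ℝ)) x := hproj.const_mul a
      have hsub : HasFDerivAt (fun y => v y i - a * y i)
          (fderiv ℝ (fun y => v y i) x - a • (ContinuousLinearMap.proj i : V3 →L[ℝ] ℝ)) x :=
        (hdiff i x hx).hasFDerivAt.sub hmul
      rw [hsub.fderiv]
      ext u
      have hu : u = ∑ j, Pi.single j (u j) := by
        rw [Finset.univ_sum_single]
      rw [hu]
      rw [map_sum, ContinuousLinearMap.zero_apply]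
      refine Finset.sum_eq_zero fun j _ => ?_
      have hsingle : (Pi.single j (u j) : V3) = u j • (Pi.single j 1 : V3) := by
        funext m
        by_cases hm : m = j
        · subst hm; simp
        · simp [Pi.single_apply, Ne.symm hm, hm]
      rw [hsingle, _root_.map_smul]
      by_cases hji : j = i
      · subst hji
        have := hdiag x hx j
        simp only [ContinuousLinearMap.sub_apply, ContinuousLinearMap.smul_apply,
          ContinuousLinearMap.proj_apply, smul_eq_mul]
        have hdval : fderiv ℝ (fun y => v y j) x (Pi.single j 1) = a := by
          have := hdiag x hx j
          rw [show pd j (fun y => v y j) x = fderiv ℝ (fun y => v y j) x (Pi.single j 1) from rfl] at this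
          rw [this]
          exact hca x hx
        rw [hdval]
        simp
      · have := hoff x hx i j (Ne.symm hji)
        simp only [ContinuousLinearMap.sub_apply, ContinuousLinearMap.smul_apply,
          ContinuousLinearMap.proj_apply, smul_eq_mul]
        rw [show fderiv ℝ (fun y => v y i) x (Pi.single j 1) = pd j (fun y => v y i) x from rfl,
          this]
        simp [Pi.single_apply, hji]
    -- hence each component of v - a x is locally constant, so constant
    have hwconst : ∀ i : Fin 3, ∀ x ∈ Ω, v x i - a * x i = v x₀ i - a * x₀ i := by
      intro i x hx
      refine loc_const_eq hΩ hconn (g := fun y => v y i - a * y i) ?_ hx hx₀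
      intro w hw
      obtain ⟨ε, hε, hball⟩ := Metric.isOpen_iff.mp hΩ w hw
      refine ⟨ε, hε, hball, fun y hy => ?_⟩
      have hdiffB : DifferentiableOn ℝ (fun y => v y i - a * y i) (Metric.ball w ε) := by
        intro p hp
        exact (((hdiff i p (hball hp)).sub
          ((hasFDerivAt_apply (𝕜 := ℝ) i p).const_mul a).differentiableAt)).differentiableWithinAt
      exact (convex_ball w ε).is_const_of_fderivWithin_eq_zero hdiffB
        (fun p hp => by
          rw [fderivWithin_of_isOpen Metric.isOpen_ball hp]
          exact hfz i p (hball hp)) hy (Metric.mem_ball_self hε)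
    refine ⟨a, fun i => v x₀ i - a * x₀ i, fun x hx => ?_⟩
    funext i
    have := hwconst i x hx
    simp only [Pi.add_apply, Pi.smul_apply, smul_eq_mul]
    linarith
  · rintro ⟨a, b, hab⟩ x hx
    have hpd : ∀ i j : Fin 3, pd j (fun y => v y i) x = a * (Pi.single j 1 : V3) i := by
      intro i j
      have heq : (fun y => v y i) =ᶠ[nhds x] fun y => a * y i + b i := by
        filter_upwards [hΩ.eventually_mem hx] with y hy
        rw [hab y hy]
        simp
      have haff : HasFDerivAt (fun y : V3 => a * y i + b i)
          (a • (ContinuousLinearMap.proj i : V3 →L[ℝ] ℝ)) x :=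
        ((hasFDerivAt_apply (𝕜 := ℝ) i x).const_mul a).add_const (b i)
      rw [pd, Filter.EventuallyEq.fderiv_eq heq, haff.fderiv]
      simp
    have hgm : gradM v x = a • (1 : Matrix (Fin 3) (Fin 3) ℝ) := by
      ext i j
      rw [gradM, Matrix.of_apply, hpd i j]
      by_cases hij : i = j
      · subst hij; simp
      · simp [Pi.single_apply, Matrix.one_apply_ne hij, Ne.symm hij, hij]
    rw [devM, hgm]
    have htr : Matrix.trace (a • (1 : Matrix (Fin 3) (Fin 3) ℝ)) = 3 * a := by
      simp [Matrix.trace_smul, Matrix.trace_one]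
      ring
    rw [htr]
    have : (3 * a / 3 : ℝ) = a := by ring
    rw [this, sub_self]


def rtb : Fin 4 → (V3 → V3) :=
  ![fun x => x, fun _ => Pi.single 0 1, fun _ => Pi.single 1 1, fun _ => Pi.single 2 1]

lemma rtb_indep : LinearIndependent ℝ rtb := by
  rw [Fintype.linearIndependent_iff]
  intro g hg
  have h0 : ∀ x : V3, (∑ i, g i • rtb i) x = 0 := fun x => congrFun hg x
  have e0 := congrFun hg 0
  have key : ∀ x : V3, g 0 • x + (g 1 • (Pi.single 0 1 : V3) + g 2 • (Pi.single 1 1 : V3) + g 3 • (Pi.single 2 1 : V3)) = 0 := by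
    intro x
    have := congrFun hg x
    simpa [rtb, Fin.sum_univ_four, add_assoc] using this
  have hz := key 0
  simp only [smul_zero, zero_add] at hz
  have hx := key (Pi.single 0 1)
  rw [hz, add_zero] at hx
  have hg0 : g 0 = 0 := by
    have := congrFun hx 0
    simpa using this
  have hg1 : g 1 = 0 := by
    have := congrFun hz 0
    simpa [Pi.single_apply] using this
  have hg2 : g 2 = 0 := by
    have := congrFun hz 1
    simpa [Pi.single_apply] using this
  have hg3 : g 3 = 0 := by
    have := congrFun hz 2
    simpa [Pi.single_apply] using this
  intro i; fin_cases i <;> assumption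

lemma span_RT : Submodule.span ℝ RTset = Submodule.span ℝ (Set.range rtb) := by
  apply le_antisymm
  · rw [Submodule.span_le]
    rintro v ⟨a, b, hv⟩
    have hv' : v = a • rtb 0 + b 0 • rtb 1 + b 1 • rtb 2 + b 2 • rtb 3 := by
      funext x
      rw [hv x]
      funext i
      fin_cases i <;> simp [rtb, Pi.single_apply]
    rw [hv']
    refine Submodule.add_mem _ (Submodule.add_mem _ (Submodule.add_mem _ ?_ ?_) ?_) ?_ <;>
      exact Submodule.smul_mem _ _ (Submodule.subset_span (Set.mem_range_self _))
  · rw [Submodule.span_le]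
    rintro v ⟨i, rfl⟩
    apply Submodule.subset_span
    fin_cases i
    · exact ⟨1, 0, fun x => by simp [rtb]⟩
    · exact ⟨0, Pi.single 0 1, fun x => by simp [rtb]⟩
    · exact ⟨0, Pi.single 1 1, fun x => by simp [rtb]⟩
    · exact ⟨0, Pi.single 2 1, fun x => by simp [rtb]⟩

lemma RT_dim : Module.finrank ℝ ↥(Submodule.span ℝ RTset) = 4 := by
  rw [span_RT, finrank_span_eq_card rtb_indep]
  simp

/-- `RT` has dimension 4, and on a connected open set it is exactly the kernel of
`dev grad` acting on C¹ vector fields. -/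
theorem RT_dim_and_ker_devGrad :
    Module.finrank ℝ ↥(Submodule.span ℝ RTset) = 4 ∧
    ∀ (Ω : Set V3), IsOpen Ω → IsConnected Ω →
      ∀ v : V3 → V3, (∀ i, ContDiffOn ℝ 1 (fun x => v x i) Ω) →
        ((∀ x ∈ Ω, devM (gradM v x) = 0) ↔
          ∃ (a : ℝ) (b : V3), ∀ x ∈ Ω, v x = a • x + b) :=
  ⟨RT_dim, part2⟩

end
end
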